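/- arXiv:2505.05548 — 4 statements merged into one kernel-verified Lean document; each statement's English description precedes it below -/
import Mathlib

section
/- Under the dynamics γ_{k+1} = γ_k + δ·g·(ñ(s_k)·cos(0) − cos γ_k)/v_k with ñ(s_k) = cos γ_k + (1/g)·min(λ·v_k·(γ_max−γ_k)/δ, α(s_k)), the pitch update satisfies γ_k ≤ γ_{k+1} ≤ γ_k + λ·(γ_max − γ_k) whenever γ_k ≤ γ_max, v_k ≥ v_min > 0, n_max > 1, γ_max > 0, λ ∈ (0,1], δ > 0, g > 0. -/
/-!
With the safe bank angle `0`, the load factor `ñ` cancels `cos γₖ` exactly, so the pitch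
increment is `(δ / vₖ) · u` for the clipped command `u = min (λ vₖ (γ_max - γₖ) / δ) α`.
Since `α ≥ 0` and `γₖ ≤ γ_max`, the command lies in `[0, λ vₖ (γ_max - γₖ) / δ]`, and multiplying
by `δ / vₖ > 0` gives an increment in `[0, λ (γ_max - γₖ)]`.
-/

lemma pitch_update_eq_add_clipped {g : ℝ} (hg : g ≠ 0) (γ δ v u : ℝ) :
    γ + δ * g * ((Real.cos γ + 1 / g * u) * Real.cos 0 - Real.cos γ) / v = γ + δ * u / v := by
  rw [Real.cos_zero]
  field_simp
  ring

lemma load_margin_nonneg {γmax lam v δ g nmax : ℝ} (hγmax : 0 < γmax) (hlam : 0 < lam)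
    (hv : 0 < v) (hδ : 0 < δ) (hg : 0 < g) (hnmax : 1 < nmax) :
    0 ≤ min (γmax * lam * v / δ) (g * nmax - g) :=
  le_min (by positivity) (by nlinarith)

lemma add_clipped_step_mem_Icc {γ γmax lam v δ α : ℝ} (hγ : γ ≤ γmax) (hlam : 0 ≤ lam)
    (hv : 0 < v) (hδ : 0 < δ) (hα : 0 ≤ α) :
    γ + δ * min (lam * v * (γmax - γ) / δ) α / v ∈ Set.Icc γ (γ + lam * (γmax - γ)) := by
  have hcmd : 0 ≤ lam * v * (γmax - γ) / δ := by
    have := sub_nonneg.mpr hγ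
    positivity
  have hmin_nonneg : 0 ≤ min (lam * v * (γmax - γ) / δ) α := le_min hcmd hα
  refine ⟨le_add_of_nonneg_right (by positivity), (add_le_add_iff_left γ).mpr ?_⟩
  calc δ * min (lam * v * (γmax - γ) / δ) α / v
      ≤ δ * (lam * v * (γmax - γ) / δ) / v := by gcongr; exact min_le_left _ _
    _ = lam * (γmax - γ) := by field_simp

theorem stmt_5_general (vmin nmax γmax δ g lam vk γk : ℝ)
    (hγ : γk ≤ γmax) (hv : vk ≥ vmin) (hvmin : vmin > 0) (hnmax : nmax > 1)
    (hγmax : γmax > 0) (hlam0 : 0 < lam) (hδ : δ > 0) (hg : g > 0)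
    (α ntil γk1 : ℝ)
    (hα : α = min (γmax * lam * vk / δ) (g * nmax - g))
    (hntil : ntil = Real.cos γk + (1 / g) * min (lam * vk * (γmax - γk) / δ) α)
    (hdyn : γk1 = γk + δ * g * (ntil * Real.cos 0 - Real.cos γk) / vk) :
    γk ≤ γk1 ∧ γk1 ≤ γk + lam * (γmax - γk) := by
  have hvk : 0 < vk := hvmin.trans_le hv
  have hα0 : 0 ≤ α := hα ▸ load_margin_nonneg hγmax hlam0 hvk hδ hg hnmax
  rw [hdyn, hntil, pitch_update_eq_add_clipped hg.ne']
  exact add_clipped_step_mem_Icc hγ hlam0.le hvk hδ hα0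

theorem stmt_5 (vmin nmax γmax δ g lam vk γk : ℝ)
    (hγ : γk ≤ γmax) (hv : vk ≥ vmin) (hvmin : vmin > 0) (hnmax : nmax > 1)
    (hγmax : γmax > 0) (hlam0 : 0 < lam) (hlam1 : lam ≤ 1) (hδ : δ > 0) (hg : g > 0)
    (α ntil γk1 : ℝ)
    (hα : α = min (γmax * lam * vk / δ) (g * nmax - g))
    (hntil : ntil = Real.cos γk + (1 / g) * min (lam * vk * (γmax - γk) / δ) α)
    (hdyn : γk1 = γk + δ * g * (ntil * Real.cos 0 - Real.cos γk) / vk) :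
    γk ≤ γk1 ∧ γk1 ≤ γk + lam * (γmax - γk) :=
  stmt_5_general vmin nmax γmax δ g lam vk γk hγ hv hvmin hnmax hγmax hlam0 hδ hg α ntil γk1 hα
    hntil hdyn
end

section
/- Let α > 0, v > 0, δ > 0, γ < 0 with γ ≤ −δ·α/v, z, z_min ∈ ℝ. Set τ = −γ·v/α, γ' = γ + δ·α/v, τ' = τ − δ, z' = z + δ·v·sin γ. Then z' + v·γ'·(τ' + δ) − z_min ≥ z + v·γ·(τ + δ) − z_min. That is, b_5 is nondecreasing along the safe maneuver when pitch stays negative. -/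
/-!
Expanding both sides, the terms `-v²γ²/α` coincide and the gain of `b₅` over one step is
`δ v (sin γ - 2γ)`, which is nonnegative since `sin γ ≥ γ ≥ 2γ` for `γ ≤ 0`.
-/

open Real

lemma b5_step_sub_eq (α v δ γ z zmin : ℝ) (hα : α ≠ 0) (hv : v ≠ 0) :
    ((z + δ * v * sin γ) + v * (γ + δ * α / v) * ((-γ * v / α - δ) + δ) - zmin) -
        (z + v * γ * (-γ * v / α + δ) - zmin) =
      δ * v * (sin γ - 2 * γ) := by
  field_simp
  ring

lemma two_mul_le_sin_of_nonpos {x : ℝ} (hx : x ≤ 0) : 2 * x ≤ sin x := by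
  linarith [le_sin hx]

theorem stmt_8_general (α v δ γ z zmin : ℝ) (hα : α > 0) (hv : v > 0) (hδ : δ > 0)
    (hγ : γ < 0) :
    (z + δ * v * Real.sin γ) + v * (γ + δ * α / v) * ((-γ * v / α - δ) + δ) - zmin ≥
      z + v * γ * (-γ * v / α + δ) - zmin := by
  rw [ge_iff_le, ← sub_nonneg, b5_step_sub_eq α v δ γ z zmin hα.ne' hv.ne']
  exact mul_nonneg (by positivity) (sub_nonneg.mpr (two_mul_le_sin_of_nonpos hγ.le))

theorem stmt_8 (α v δ γ z zmin : ℝ) (hα : α > 0) (hv : v > 0) (hδ : δ > 0)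
    (hγ : γ < 0) (hγ2 : γ ≤ -δ * α / v) :
    (z + δ * v * Real.sin γ) + v * (γ + δ * α / v) * ((-γ * v / α - δ) + δ) - zmin ≥
      z + v * γ * (-γ * v / α + δ) - zmin :=
  stmt_8_general α v δ γ z zmin hα hv hδ hγ
end

section
/- Let α > 0, v > 0, δ > 0, −δ·α/v < γ < 0, z, z_min ∈ ℝ, and τ = −γ·v/α. Then 0 < τ < δ, the updated pitch γ' = γ + δ·α/v satisfies γ' ≥ 0, and z + δ·v·sin γ − z_min ≥ z + (δ + τ)·v·γ − z_min. -/
/-! With `τ = -γ v / α`, the bound `-δ α / v < γ < 0` is the same as `0 < τ < δ`, and the new pitch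
`γ + δ α / v` is nonnegative. For the altitude, `γ ≤ 0` gives `γ ≤ sin γ`, so the term `δ v sin γ`
dominates `δ v γ`, while the extra term `τ v γ` is nonpositive. -/

open Real

section PitchRecovery

variable {α v δ γ : ℝ}

lemma neg_mul_div_pos (hα : 0 < α) (hv : 0 < v) (hγ : γ < 0) : 0 < -γ * v / α := by
  have : 0 < -γ := neg_pos.2 hγ
  positivity

lemma neg_mul_div_lt_of_neg_mul_div_lt (hα : 0 < α) (hv : 0 < v) (h : -δ * α / v < γ) :
    -γ * v / α < δ := by
  rw [div_lt_iff₀ hv] at h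
  rw [div_lt_iff₀ hα]
  linarith

lemma add_mul_mul_le_mul_mul_sin {τ : ℝ} (hδ : 0 ≤ δ) (hv : 0 ≤ v) (hτ : 0 ≤ τ) (hγ : γ ≤ 0) :
    (δ + τ) * v * γ ≤ δ * v * sin γ := by
  have hsin : δ * v * γ ≤ δ * v * sin γ := mul_le_mul_of_nonneg_left (le_sin hγ) (by positivity)
  have hτγ : τ * v * γ ≤ 0 := mul_nonpos_of_nonneg_of_nonpos (by positivity) hγ
  linarith

end PitchRecovery

theorem stmt_9 (α v δ γ z zmin : ℝ) (hα : α > 0) (hv : v > 0) (hδ : δ > 0)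
    (hγl : -δ * α / v < γ) (hγ : γ < 0) :
    (0 < -γ * v / α ∧ -γ * v / α < δ) ∧ γ + δ * α / v ≥ 0 ∧
      z + δ * v * Real.sin γ - zmin ≥ z + (δ + -γ * v / α) * v * γ - zmin := by
  have hτ : 0 < -γ * v / α := neg_mul_div_pos hα hv hγ
  refine ⟨⟨hτ, neg_mul_div_lt_of_neg_mul_div_lt hα hv hγl⟩, ?_, ?_⟩
  · rw [neg_mul, neg_div] at hγl
    linarith
  · linarith [add_mul_mul_le_mul_mul_sin hδ.le hv.le hτ.le hγ.le]
end

section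
/- Suppose b_i(s) ≥ 0 for i = 1,…,5 implies s ∈ S, the safe control ũ(s) ∈ U whenever b_i(s) ≥ 0 for i = 1,…,4, and b_i(f(s, ũ(s))) − (1−λ)·b_i(s) ≥ 0 for i = 1,…,5 whenever all b_i(s) ≥ 0. Then h(s) = min_{i=1,…,5} b_i(s) is a DT-ECBF on {s : h(s) ≥ 0}, and any trajectory starting with h(s_0) ≥ 0 and controlled by ũ remains in S for all time. -/
/-! The minimum `h` of finitely many functions inherits the decay condition
`b (f s u) ≥ (1 - λ) b s` from its members, because `1 - λ ≥ 0` lets the factor pass through the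
minimum. Hence the closed loop maps `{h ≥ 0}` into itself, and on that set every `b i` is
nonnegative, which puts the state in the safe set. -/

def IsDTECBF {S C : Type*} (f : S → C → S) (U : Set C) (lam : ℝ)
    (h : S → ℝ) (D : Set S) : Prop :=
  ∀ s ∈ D, ∃ u ∈ U, h (f s u) - (1 - lam) * h s ≥ 0

open Set

theorem mul_ciInf_le_ciInf {ι : Type*} [Finite ι] {c : ℝ} (hc : 0 ≤ c) {x y : ι → ℝ}
    (hxy : ∀ i, c * x i ≤ y i) : c * ⨅ i, x i ≤ ⨅ i, y i := by
  rw [Real.mul_iInf_of_nonneg hc]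
  exact ciInf_mono (finite_range _).bddBelow hxy

theorem nonneg_ciInf_iff {ι : Type*} [Finite ι] [Nonempty ι] {x : ι → ℝ} :
    0 ≤ ⨅ i, x i ↔ ∀ i, 0 ≤ x i :=
  le_ciInf_iff (finite_range x).bddBelow

theorem mapsTo_superlevel_of_decay {α : Type*} {F : α → α} {h : α → ℝ} {lam : ℝ}
    (hlam : lam ≤ 1) (hdecay : ∀ s, 0 ≤ h s → (1 - lam) * h s ≤ h (F s)) :
    MapsTo F {s | 0 ≤ h s} {s | 0 ≤ h s} := fun s hs =>
  (mul_nonneg (sub_nonneg.2 hlam) hs).trans (hdecay s hs)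

theorem Set.MapsTo.mem_of_trajectory {α : Type*} {F : α → α} {A : Set α} (hF : MapsTo F A A)
    {s : ℕ → α} (hs : ∀ k, s (k + 1) = F (s k)) (h0 : s 0 ∈ A) : ∀ k, s k ∈ A
  | 0 => h0
  | k + 1 => hs k ▸ hF (hF.mem_of_trajectory hs h0 k)

theorem stmt_19_general {S' C : Type*} (f : S' → C → S') (U : Set C) (lam : ℝ)
    (hlam1 : lam ≤ 1)
    (b : Fin 5 → S' → ℝ) (Ssafe : Set S')
    (utilde : S' → C)
    (h : S' → ℝ) (hh : ∀ s, h s = ⨅ i, b i s)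
    (hSafe : ∀ s, (∀ i, b i s ≥ 0) → s ∈ Ssafe)
    (hU : ∀ s, (∀ i : Fin 5, i.val < 4 → b i s ≥ 0) → utilde s ∈ U)
    (hDec : ∀ s, (∀ i, b i s ≥ 0) → ∀ i, b i (f s (utilde s)) - (1 - lam) * b i s ≥ 0) :
    IsDTECBF f U lam h {s | h s ≥ 0} ∧
      ∀ s : ℕ → S', (∀ k, s (k + 1) = f (s k) (utilde (s k))) → h (s 0) ≥ 0 →
        ∀ k, s k ∈ Ssafe := by
  have hnonneg : ∀ s, h s ≥ 0 ↔ ∀ i, b i s ≥ 0 := fun s => hh s ▸ nonneg_ciInf_iff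
  have hdecay : ∀ s, 0 ≤ h s → (1 - lam) * h s ≤ h (f s (utilde s)) := fun s hs => by
    rw [hh, hh]
    exact mul_ciInf_le_ciInf (sub_nonneg.2 hlam1) fun i => by
      linarith [hDec s ((hnonneg s).1 hs) i]
  have hinv := mapsTo_superlevel_of_decay hlam1 hdecay
  refine ⟨fun s hs => ⟨utilde s, hU s fun i _ => (hnonneg s).1 hs i, sub_nonneg.2 (hdecay s hs)⟩,
    fun s hdyn h0 k => hSafe _ ((hnonneg _).1 (hinv.mem_of_trajectory hdyn h0 k))⟩

theorem stmt_19 {S' C : Type*} (f : S' → C → S') (U : Set C) (lam : ℝ)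
    (hlam0 : 0 < lam) (hlam1 : lam ≤ 1)
    (b : Fin 5 → S' → ℝ) (Ssafe : Set S')
    (utilde : S' → C)
    (h : S' → ℝ) (hh : ∀ s, h s = ⨅ i, b i s)
    (hSafe : ∀ s, (∀ i, b i s ≥ 0) → s ∈ Ssafe)
    (hU : ∀ s, (∀ i : Fin 5, i.val < 4 → b i s ≥ 0) → utilde s ∈ U)
    (hDec : ∀ s, (∀ i, b i s ≥ 0) → ∀ i, b i (f s (utilde s)) - (1 - lam) * b i s ≥ 0) :
    IsDTECBF f U lam h {s | h s ≥ 0} ∧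
      ∀ s : ℕ → S', (∀ k, s (k + 1) = f (s k) (utilde (s k))) → h (s 0) ≥ 0 →
        ∀ k, s k ∈ Ssafe :=
  stmt_19_general f U lam hlam1 b Ssafe utilde h hh hSafe hU hDec
end
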